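/- arXiv:1802.08507 — 7 statements merged into one kernel-verified Lean document; each statement's English description precedes it below -/
import Mathlib

section
/- Let z be a square-free integer, z ∉ {0, 1, -1}, and let ℓ = ℚ(√z). Then S(ℓ) = {w ∈ Z : |gcd(z,w)| < √|z|} is a transversal of the nontrivial cosets of ℚ* ∩ ℓ_sq in ℚ*, where ℚ* ∩ ℓ_sq = ℚ*_sq ∪ z·ℚ*_sq. -/
/-!
Write `q = a r²` and `q / z = b s²` with `a, b` squarefree integers. Squarefree parts are unique,
so the squarefree `w` with `q ∈ w ℚ*² ∪ w z ℚ*²` are exactly `a` and `b`, and neither is `1`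
because `q ∉ ℚ*² ∪ z ℚ*²`. Since `z a b` is a square and `z, a, b` are squarefree,
`gcd(z, a) · gcd(z, b) = |z|`; the two factors differ because `|z| ≥ 2` is squarefree, so exactly
one of them is smaller than `√|z|`.
-/

namespace Int

theorem eq_of_squarefree_of_isSquare_mul {a b : ℤ} (ha : Squarefree a) (hb : Squarefree b)
    (h : IsSquare (a * b)) : a = b := by
  obtain ⟨k, hk⟩ := h
  obtain ⟨m, rfl⟩ : a ∣ k := ha.isRadical 2 k ⟨b, by rw [hk, sq]⟩
  have hb' : b = a * m ^ 2 := mul_left_cancel₀ ha.ne_zero (by rw [hk]; ring)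
  have hm : IsUnit m := hb m ⟨a, by rw [hb']; ring⟩
  rcases Int.isUnit_iff.mp hm with rfl | rfl <;> simp [hb']

theorem isSquare_of_isSquare_sq_mul {d x : ℤ} (hd : d ≠ 0) (h : IsSquare (d ^ 2 * x)) :
    IsSquare x := by
  obtain ⟨k, hk⟩ := h
  obtain ⟨m, rfl⟩ : d ∣ k := (Int.pow_dvd_pow_iff two_ne_zero).mp ⟨x, by rw [hk, sq]⟩
  exact ⟨m, mul_left_cancel₀ (pow_ne_zero 2 hd) (by rw [hk]; ring)⟩

theorem exists_squarefree_mul_sq (n : ℤ) : ∃ a b : ℤ, Squarefree a ∧ n = a * b ^ 2 := by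
  obtain ⟨a, b, hab, ha⟩ := Nat.sq_mul_squarefree n.natAbs
  have hn : (n.natAbs : ℤ) = a * (b : ℤ) ^ 2 := by rw [← hab]; push_cast; ring
  rcases Int.natAbs_eq n with hpos | hneg
  · exact ⟨a, b, Int.squarefree_natCast.mpr ha, by rw [hpos, hn]⟩
  · refine ⟨-a, b, ?_, by rw [hneg, hn]; ring⟩
    rw [← Int.squarefree_natAbs, Int.natAbs_neg, Int.natAbs_natCast]
    exact ha

theorem isSquare_mul_of_mul_sq_eq_mul_sq {a b : ℤ} {r s : ℚ} (hs : s ≠ 0)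
    (h : (a : ℚ) * r ^ 2 = b * s ^ 2) : IsSquare (a * b) := by
  refine Rat.isSquare_intCast_iff.mp ⟨a * r / s, ?_⟩
  field_simp
  push_cast
  linear_combination (-(a : ℚ)) * h

theorem eq_of_squarefree_of_mul_sq_eq_mul_sq {a b : ℤ} {r s : ℚ} (ha : Squarefree a)
    (hb : Squarefree b) (hs : s ≠ 0) (h : (a : ℚ) * r ^ 2 = b * s ^ 2) : a = b :=
  eq_of_squarefree_of_isSquare_mul ha hb (isSquare_mul_of_mul_sq_eq_mul_sq hs h)

theorem gcd_mul_gcd_eq_natAbs_of_isSquare_mul {z a b : ℤ} (hz : Squarefree z)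
    (ha : Squarefree a) (hb : Squarefree b) (h : IsSquare (z * a * b)) :
    Int.gcd z a * Int.gcd z b = z.natAbs := by
  set d : ℕ := Int.gcd a z
  have hd : 0 < d := Int.gcd_pos_iff.mpr (Or.inl ha.ne_zero)
  have hd0 : (d : ℤ) ≠ 0 := by exact_mod_cast hd.ne'
  obtain ⟨a', ha'⟩ : (d : ℤ) ∣ a := Int.gcd_dvd_left a z
  obtain ⟨z', hz'⟩ : (d : ℤ) ∣ z := Int.gcd_dvd_right a z
  have hcop : IsCoprime a' z' := by
    have := Int.gcd_div_gcd_div_gcd hd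
    change Int.gcd (a / d) (z / d) = 1 at this
    rwa [ha', hz', Int.mul_ediv_cancel_left _ hd0, Int.mul_ediv_cancel_left _ hd0,
      ← Int.isCoprime_iff_gcd_eq_one] at this
  have hsf : Squarefree (a' * z') := squarefree_mul_iff.mpr ⟨hcop.isRelPrime,
    ha.squarefree_of_dvd ⟨d, by rw [ha']; ring⟩, hz.squarefree_of_dvd ⟨d, by rw [hz']; ring⟩⟩
  -- `z a b = d² (a' z') b`, so `b` is the squarefree part `a' z'` of `z a / d²`.
  have hb' : a' * z' = b := eq_of_squarefree_of_isSquare_mul hsf hb <|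
    isSquare_of_isSquare_sq_mul hd0 (by rw [ha', hz'] at h; convert h using 1; ring)
  have hda' : Int.gcd d a' = 1 := Int.isCoprime_iff_gcd_eq_one.mp <|
    isRelPrime_iff_isCoprime.mp (squarefree_mul_iff.mp (ha' ▸ ha)).1
  have hzb : Int.gcd z b = z'.natAbs := by rw [← hb', hz', Int.gcd_mul_right, hda', one_mul]
  calc Int.gcd z a * Int.gcd z b = d * z'.natAbs := by rw [Int.gcd_comm, hzb]
    _ = z.natAbs := by rw [hz', Int.natAbs_mul, Int.natAbs_natCast]

theorem eq_or_eq_of_squarefree_of_mem_sq_classes {z a b w : ℤ} {q r s t : ℚ} (hz : z ≠ 0)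
    (ha : Squarefree a) (hb : Squarefree b) (hw : Squarefree w) (hr : r ≠ 0) (hs : s ≠ 0)
    (hqa : q = a * r ^ 2) (hqb : q = b * (z * s ^ 2))
    (hqw : q = w * t ^ 2 ∨ q = w * (z * t ^ 2)) : w = a ∨ w = b := by
  rcases hqw with hqw | hqw
  · exact .inl (eq_of_squarefree_of_mul_sq_eq_mul_sq hw ha hr (hqw ▸ hqa))
  · have hzQ : (z : ℚ) ≠ 0 := by exact_mod_cast hz
    refine .inr (eq_of_squarefree_of_mul_sq_eq_mul_sq (r := t) hw hb hs (mul_left_cancel₀ hzQ ?_))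
    linear_combination hqb - hqw

end Int

theorem Rat.exists_squarefree_mul_sq {q : ℚ} (hq : q ≠ 0) :
    ∃ (a : ℤ) (r : ℚ), Squarefree a ∧ r ≠ 0 ∧ q = a * r ^ 2 := by
  obtain ⟨a, b, ha, hab⟩ := Int.exists_squarefree_mul_sq (q.num * q.den)
  have hden : (q.den : ℚ) ≠ 0 := by exact_mod_cast q.den_nz
  have hq' : q * q.den ^ 2 = a * (b : ℚ) ^ 2 := by
    rw [sq, ← mul_assoc, Rat.mul_den_eq_num]; exact_mod_cast hab
  refine ⟨a, b / q.den, ha, ?_, ?_⟩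
  · rintro h
    rw [div_eq_zero_iff, or_iff_left hden] at h
    rw [h] at hq'
    simp [hq] at hq'
  · field_simp
    exact hq'

theorem Nat.sq_lt_iff_not_sq_lt_of_mul_eq {m n N : ℕ} (hN : Squarefree N) (hN1 : N ≠ 1)
    (h : m * n = N) : m ^ 2 < N ↔ ¬ n ^ 2 < N := by
  have hmn : m ≠ n := by
    rintro rfl
    have : m = 1 := Nat.isUnit_iff.mp (hN m ⟨1, by rw [← h, mul_one]⟩)
    subst this
    omega
  have hm : 0 < m := Nat.pos_of_ne_zero (by rintro rfl; exact hN.ne_zero (by rw [← h, zero_mul]))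
  have hn : 0 < n := Nat.pos_of_ne_zero (by rintro rfl; exact hN.ne_zero (by rw [← h, mul_zero]))
  rcases hmn.lt_or_gt with hlt | hlt <;> constructor <;> intro <;> nlinarith

theorem existsUnique_eq_or_eq_and {α : Type*} {P : α → Prop} {a b : α} (h : P a ↔ ¬ P b) :
    ∃! w, (w = a ∨ w = b) ∧ P w := by
  by_cases hPa : P a
  · refine ⟨a, ⟨Or.inl rfl, hPa⟩, ?_⟩
    rintro w ⟨rfl | rfl, hw⟩
    · rfl
    · exact absurd hw (h.mp hPa)
  · refine ⟨b, ⟨Or.inr rfl, not_not.mp (mt h.mpr hPa)⟩, ?_⟩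
    rintro w ⟨rfl | rfl, hw⟩
    · exact absurd hw hPa
    · rfl

/-- For z ∈ Z, z ≠ -1, ℓ = ℚ(√z), where ℚ* ∩ ℓ_sq = ℚ*_sq ∪ z·ℚ*_sq,
the set S(ℓ) = {w ∈ Z : |gcd(z,w)| < √|z|} is a transversal of the nontrivial cosets. -/
theorem transversal_Qsqrtz (z : ℤ) (hz : Squarefree z) (hz1 : z ≠ 1) (hzm1 : z ≠ -1) :
    ∀ q : ℚ, q ≠ 0 →
      ¬(∃ r : ℚ, r ≠ 0 ∧ (q = r ^ 2 ∨ q = (z : ℚ) * r ^ 2)) →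
      ∃! w : ℤ, (Squarefree w ∧ w ≠ 1 ∧ (Int.gcd z w : ℤ) ^ 2 < |z|) ∧
        ∃ r : ℚ, r ≠ 0 ∧ (q = (w : ℚ) * r ^ 2 ∨ q = (w : ℚ) * ((z : ℚ) * r ^ 2)) := by
  intro q hq hns
  have hzQ : (z : ℚ) ≠ 0 := Int.cast_ne_zero.mpr hz.ne_zero
  obtain ⟨a, r, ha, hr, hqa⟩ := Rat.exists_squarefree_mul_sq hq
  obtain ⟨b, s, hb, hs, hqb⟩ := Rat.exists_squarefree_mul_sq (div_ne_zero hq hzQ)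
  replace hqb : q = b * (z * s ^ 2) := by rw [div_eq_iff hzQ] at hqb; rw [hqb]; ring
  have hgcd : Int.gcd z a * Int.gcd z b = z.natAbs := by
    refine Int.gcd_mul_gcd_eq_natAbs_of_isSquare_mul hz ha hb ?_
    convert Int.isSquare_mul_of_mul_sq_eq_mul_sq (b := b * z) hs
      (by push_cast; rw [← hqa, hqb]; ring) using 1
    ring
  have hsmall (w : ℤ) : (Int.gcd z w : ℤ) ^ 2 < |z| ↔ Int.gcd z w ^ 2 < z.natAbs := by
    rw [Int.abs_eq_natAbs]; exact_mod_cast Iff.rfl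
  have hclass (w : ℤ) : ((Squarefree w ∧ w ≠ 1 ∧ (Int.gcd z w : ℤ) ^ 2 < |z|) ∧
        ∃ r : ℚ, r ≠ 0 ∧ (q = (w : ℚ) * r ^ 2 ∨ q = (w : ℚ) * ((z : ℚ) * r ^ 2))) ↔
      (w = a ∨ w = b) ∧ Int.gcd z w ^ 2 < z.natAbs := by
    constructor
    · rintro ⟨⟨hw, -, hlt⟩, t, -, hqw⟩
      exact ⟨Int.eq_or_eq_of_squarefree_of_mem_sq_classes hz.ne_zero ha hb hw hr hs hqa hqb hqw,
        (hsmall w).mp hlt⟩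
    · rintro ⟨rfl | rfl, hlt⟩
      · refine ⟨⟨ha, ?_, (hsmall w).mpr hlt⟩, r, hr, .inl hqa⟩
        rintro rfl
        exact hns ⟨r, hr, .inl (by rw [hqa]; push_cast; ring)⟩
      · refine ⟨⟨hb, ?_, (hsmall w).mpr hlt⟩, s, hs, .inr hqb⟩
        rintro rfl
        exact hns ⟨s, hs, .inr (by rw [hqb]; push_cast; ring)⟩
  rw [existsUnique_congr hclass]
  exact existsUnique_eq_or_eq_and <|
    Nat.sq_lt_iff_not_sq_lt_of_mul_eq (Int.squarefree_natAbs.mpr hz) (by omega) hgcd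
end

section
/- Let z, w be square-free integers with z, w ∉ {0,1}, z ≠ -1, and let d₁ = gcd(w₁, z) > 0, d₂ = gcd(w₂, z) > 0 satisfy d₁ < √|z| and d₂ < √|z| for square-free w₁, w₂ ∈ Z. If w₁/w₂ ∈ z·ℚ*_sq, a contradiction follows; i.e., it is impossible that w₁/w₂ = z·q² for some q ∈ ℚ*. -/
/-!
Since `gcd(z, w₁w₂)` divides `gcd(w₁, z) · gcd(w₂, z) < |z|`, the square-free `z` does not divide
`w₁w₂`, so some prime `p` divides `z` but neither `w₁` nor `w₂`. Then `p ∣ s`, hence `p ∤ r`, so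
`p²` divides `zw₂`, which is impossible since `z` is square-free and `p ∤ w₂`.
-/

theorem Squarefree.exists_prime_dvd_not_dvd {R : Type*} [CommMonoidWithZero R]
    [GCDMonoid R] [UniqueFactorizationMonoid R] {z w : R} (hz : Squarefree z) (hzw : ¬z ∣ w) :
    ∃ p, Prime p ∧ p ∣ z ∧ ¬p ∣ w := by
  cases subsingleton_or_nontrivial R
  · exact absurd (Subsingleton.elim z w ▸ dvd_rfl) hzw
  obtain ⟨t, ht⟩ := gcd_dvd_left z w
  have ht_unit : ¬IsUnit t := fun hu =>
    hzw (ht ▸ (associated_mul_unit_left (gcd z w) t hu).dvd.trans (gcd_dvd_right z w))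
  have ht0 : t ≠ 0 := by rintro rfl; exact hz.ne_zero (by rw [ht, mul_zero])
  obtain ⟨p, hp, hpt⟩ := WfDvdMonoid.exists_irreducible_factor ht_unit ht0
  refine ⟨p, hp.prime, ht ▸ hpt.mul_left _, fun hpw => hp.not_isUnit (hz p ?_)⟩
  exact ht ▸ mul_dvd_mul (dvd_gcd (ht ▸ hpt.mul_left _) hpw) hpt

theorem Prime.sq_mul_ne_sq_mul_mul {R : Type*} [CommRing R] [IsDomain R] {p z w₁ w₂ r s : R}
    (hp : Prime p) (hz : Squarefree z) (hpz : p ∣ z) (hpw₁ : ¬p ∣ w₁) (hpw₂ : ¬p ∣ w₂)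
    (hrs : IsCoprime r s) : s ^ 2 * w₁ ≠ r ^ 2 * z * w₂ := by
  intro h
  have hps : p ∣ s := by
    have : p ∣ s ^ 2 * w₁ := h ▸ (hpz.mul_left _).mul_right _
    exact hp.dvd_of_dvd_pow ((hp.dvd_or_dvd this).resolve_right hpw₁)
  have hpr : ¬p ∣ r ^ 2 := fun hpr => hp.not_isUnit (hrs.isUnit_of_dvd' (hp.dvd_of_dvd_pow hpr) hps)
  have hp2 : p ^ 2 ∣ r ^ 2 * (z * w₂) := by
    rw [← mul_assoc, ← h]
    exact (pow_dvd_pow_of_dvd hps 2).mul_right _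
  exact hpw₂ (by simpa using
    hz.pow_dvd_of_squarefree_of_pow_succ_dvd_mul_right hp (hp.pow_dvd_of_dvd_mul_left 2 hpr hp2))

theorem Int.abs_le_gcd_mul_gcd_of_dvd_mul {z a b : ℤ} (hz : z ≠ 0) (h : z ∣ a * b) :
    |z| ≤ (Int.gcd a z : ℤ) * Int.gcd b z := by
  rw [Int.gcd_comm a, Int.gcd_comm b]
  have hdvd := Int.dvd_gcd_mul_gcd_iff_dvd_mul.mpr h
  refine Int.le_of_dvd ?_ ((abs_dvd z _).mpr hdvd)
  exact mod_cast Nat.mul_pos (Int.gcd_pos_of_ne_zero_left _ hz) (Int.gcd_pos_of_ne_zero_left _ hz)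

theorem no_z_square_ratio_general (z w₁ w₂ : ℤ)
    (hz : Squarefree z)
    (hd₁ : (Int.gcd w₁ z : ℤ) ^ 2 < |z|)
    (hd₂ : (Int.gcd w₂ z : ℤ) ^ 2 < |z|)
    (r s : ℤ) (hrs : IsCoprime r s)
    (h : s ^ 2 * w₁ = r ^ 2 * z * w₂) : False := by
  have hzw : ¬z ∣ w₁ * w₂ := fun hdvd => by
    nlinarith [Int.abs_le_gcd_mul_gcd_of_dvd_mul hz.ne_zero hdvd,
      sq_nonneg ((Int.gcd w₁ z : ℤ) - Int.gcd w₂ z)]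
  obtain ⟨p, hp, hpz, hpw⟩ := Squarefree.exists_prime_dvd_not_dvd hz hzw
  exact hp.sq_mul_ne_sq_mul_mul hz hpz (fun hpw₁ => hpw (hpw₁.mul_right _))
    (fun hpw₂ => hpw (hpw₂.mul_left _)) hrs h

/-- With z ∈ Z, z ≠ -1, and w₁, w₂ ∈ Z whose gcds with z are < √|z|,
it is impossible that w₁/w₂ ∈ z·ℚ*_sq (i.e. s²·w₁ = r²·z·w₂ for coprime r, s). -/
theorem no_z_square_ratio (z w₁ w₂ : ℤ)
    (hz : Squarefree z) (hz1 : z ≠ 1) (hzm1 : z ≠ -1)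
    (hw₁ : Squarefree w₁) (hw₁1 : w₁ ≠ 1)
    (hw₂ : Squarefree w₂) (hw₂1 : w₂ ≠ 1)
    (hd₁ : (Int.gcd w₁ z : ℤ) ^ 2 < |z|)
    (hd₂ : (Int.gcd w₂ z : ℤ) ^ 2 < |z|)
    (r s : ℤ) (hrs : IsCoprime r s)
    (h : s ^ 2 * w₁ = r ^ 2 * z * w₂) : False :=
  no_z_square_ratio_general z w₁ w₂ hz hd₁ hd₂ r s hrs h
end

section
/- Let z, w be square-free integers (z, w ∉ {0,1}) and d = gcd(z,w) > 0. Then there exists (a,b,c) ∈ ℤ³ \ {(0,0,0)} with a² - w·b² - z·c² = 0 if and only if there exists (a,b,c) ∈ ℤ³ \ {(0,0,0)} with d·a² - (w/d)·b² - (z/d)·c² = 0. -/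
theorem exists_sq_sub_mul_sq_sub_mul_sq_eq_zero_iff_of_isRadical {R : Type*} [CommRing R]
    [NoZeroDivisors R] {d u v : R} (hd : IsRadical d) (hd0 : d ≠ 0) :
    (∃ a b c : R, ¬(a = 0 ∧ b = 0 ∧ c = 0) ∧ a ^ 2 - d * u * b ^ 2 - d * v * c ^ 2 = 0) ↔
    (∃ a b c : R, ¬(a = 0 ∧ b = 0 ∧ c = 0) ∧ d * a ^ 2 - u * b ^ 2 - v * c ^ 2 = 0) := by
  have scale : ∀ a b c : R, (d * a) ^ 2 - d * u * b ^ 2 - d * v * c ^ 2 =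
      d * (d * a ^ 2 - u * b ^ 2 - v * c ^ 2) := fun _ _ _ => by ring
  constructor
  · rintro ⟨a, b, c, hnt, h⟩
    obtain ⟨a, rfl⟩ : d ∣ a := hd 2 a ⟨u * b ^ 2 + v * c ^ 2, by linear_combination h⟩
    refine ⟨a, b, c, fun ⟨ha, hb, hc⟩ => hnt ⟨by rw [ha, mul_zero], hb, hc⟩, ?_⟩
    rw [scale] at h
    exact (mul_eq_zero.mp h).resolve_left hd0
  · rintro ⟨a, b, c, hnt, h⟩
    refine ⟨d * a, b, c, fun ⟨ha, hb, hc⟩ => hnt ⟨(mul_eq_zero.mp ha).resolve_left hd0, hb, hc⟩, ?_⟩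
    rw [scale, h, mul_zero]

theorem ternary_descent_general (z w : ℤ) (hz : Squarefree z) (d : ℤ) (hd : d = Int.gcd z w) :
    (∃ a b c : ℤ, ¬(a = 0 ∧ b = 0 ∧ c = 0) ∧ a ^ 2 - w * b ^ 2 - z * c ^ 2 = 0) ↔
    (∃ a b c : ℤ, ¬(a = 0 ∧ b = 0 ∧ c = 0) ∧
      d * a ^ 2 - (w / d) * b ^ 2 - (z / d) * c ^ 2 = 0) := by
  obtain ⟨v, rfl⟩ : d ∣ z := hd ▸ Int.gcd_dvd_left z w
  obtain ⟨u, rfl⟩ : d ∣ w := hd ▸ Int.gcd_dvd_right _ w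
  have hd0 : d ≠ 0 := left_ne_zero_of_mul hz.ne_zero
  have hd_rad : IsRadical d := (hz.squarefree_of_dvd (dvd_mul_right d v)).isRadical
  rw [Int.mul_ediv_cancel_left u hd0, Int.mul_ediv_cancel_left v hd0]
  exact exists_sq_sub_mul_sq_sub_mul_sq_eq_zero_iff_of_isRadical hd_rad hd0

/-- For z, w square-free ∉ {0,1} with d = gcd(z,w) > 0, solvability of
a² - w·b² - z·c² = 0 is equivalent to solvability of d·a² - (w/d)·b² - (z/d)·c² = 0
(nontrivially over ℤ). -/
theorem ternary_descent (z w : ℤ) (hz : Squarefree z) (hz1 : z ≠ 1)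
    (hw : Squarefree w) (hw1 : w ≠ 1) (d : ℤ) (hd : d = Int.gcd z w) :
    (∃ a b c : ℤ, ¬(a = 0 ∧ b = 0 ∧ c = 0) ∧ a ^ 2 - w * b ^ 2 - z * c ^ 2 = 0) ↔
    (∃ a b c : ℤ, ¬(a = 0 ∧ b = 0 ∧ c = 0) ∧
      d * a ^ 2 - (w / d) * b ^ 2 - (z / d) * c ^ 2 = 0) :=
  ternary_descent_general z w hz d hd
end

section
/- Let z, w be square-free integers with z, w ∉ {0,1}, ℓ = ℚ(√z), and d = gcd(z,w) > 0. Then w ∈ n_{ℓ/ℚ}(ℓ*) (i.e., w = a² - zb² for some rationals a,b not both zero) if and only if: z and w are not both negative, z is a square modulo w/d, w is a square modulo z/d, and -zw/d² is a square modulo d. -/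
/-!
Clearing denominators, `w` is a norm from `ℚ(√z)` iff `x² - z y² - w t² = 0` has a nontrivial
integral solution; writing `z = d z₁`, `w = d w₁`, squarefreeness of `d` gives `d ∣ x`, so this
happens iff `d X² - z₁ y² - w₁ t² = 0` is solvable. Its coefficients are squarefree and pairwise
coprime, so Legendre's theorem applies. Its conditions are necessary by reducing a primitive
solution modulo each coefficient. Conversely, up to permuting and negating the coefficients of
`a x² + b y² + c z²` we may take `a, b > 0 > c`; the conditions factor the form into linear forms
modulo `a`, `b` and `c`, and a pigeonhole argument makes these vanish at a nonzero point of the box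
`x² ≤ |bc|`, `y² ≤ |ca|`, `z² ≤ |ab|`. There the form is a small multiple of `abc`, and each
possible multiple either is `0`, yields a solution by one composition step, or forces `a = b = 1`,
which is the two-squares theorem.
-/

def DiagIsotropic (a b c : ℤ) : Prop :=
  ∃ x y z : ℤ, ¬(x = 0 ∧ y = 0 ∧ z = 0) ∧ a * x ^ 2 + b * y ^ 2 + c * z ^ 2 = 0

def LegendreConditions (a b c : ℤ) : Prop :=
  (∃ r, a ∣ r ^ 2 + b * c) ∧ (∃ r, b ∣ r ^ 2 + c * a) ∧ (∃ r, c ∣ r ^ 2 + a * b)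

section

variable {a b c : ℤ}

theorem DiagIsotropic.rotate (h : DiagIsotropic a b c) : DiagIsotropic b c a := by
  obtain ⟨x, y, z, hxyz, h⟩ := h
  exact ⟨y, z, x, by tauto, by linear_combination h⟩

theorem DiagIsotropic.neg (h : DiagIsotropic a b c) : DiagIsotropic (-a) (-b) (-c) := by
  obtain ⟨x, y, z, hxyz, h⟩ := h
  exact ⟨x, y, z, hxyz, by linear_combination -h⟩

theorem LegendreConditions.rotate (h : LegendreConditions a b c) : LegendreConditions b c a :=
  ⟨h.2.1, h.2.2, h.1⟩

theorem LegendreConditions.neg (h : LegendreConditions a b c) :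
    LegendreConditions (-a) (-b) (-c) := by
  simpa only [LegendreConditions, neg_dvd, neg_mul_neg] using h

theorem isCoprime_of_squarefree_mul {m n : ℤ} (h : Squarefree (m * n)) : IsCoprime m n :=
  isRelPrime_iff_isCoprime.mp (squarefree_mul_iff.mp h).1

theorem Int.eq_one_of_squarefree_of_sq_eq {n k : ℤ} (hn : Squarefree n) (h : k ^ 2 = n) :
    n = 1 := by
  rw [← h, Int.isUnit_sq (hn k (by rw [← h, sq]))]

theorem exists_primitive_of_diagIsotropic (h : DiagIsotropic a b c) :
    ∃ x y z : ℤ, a * x ^ 2 + b * y ^ 2 + c * z ^ 2 = 0 ∧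
      ∀ n : ℤ, n ∣ x → n ∣ y → n ∣ z → IsUnit n := by
  obtain ⟨x, y, z, hxyz, h⟩ := h
  obtain ⟨g, hg, ⟨X, rfl⟩, ⟨Y, rfl⟩, ⟨Z, rfl⟩, hgcd⟩ : ∃ g ≠ 0, g ∣ x ∧ g ∣ y ∧ g ∣ z ∧
      ∀ n, n ∣ x → n ∣ y → n ∣ z → n ∣ g :=
    ⟨gcd x (gcd y z), by simpa [gcd_eq_zero_iff] using hxyz, gcd_dvd_left _ _,
      (gcd_dvd_right _ _).trans (gcd_dvd_left _ _), (gcd_dvd_right _ _).trans (gcd_dvd_right _ _),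
      fun n hx hy hz => dvd_gcd hx (dvd_gcd hy hz)⟩
  refine ⟨X, Y, Z, ?_, fun n hX hY hZ => ?_⟩
  · refine (mul_eq_zero.mp ?_).resolve_left (pow_ne_zero 2 hg)
    linear_combination h
  · have hgn : g * n ∣ g * 1 := by
      simpa using hgcd _ (mul_dvd_mul_left g hX) (mul_dvd_mul_left g hY) (mul_dvd_mul_left g hZ)
    exact isUnit_of_dvd_one ((mul_dvd_mul_iff_left hg).mp hgn)

theorem exists_sq_add_mul_dvd_of_diagIsotropic (ha : Squarefree a)
    (hac : IsCoprime a c) (h : DiagIsotropic a b c) : ∃ r, a ∣ r ^ 2 + b * c := by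
  obtain ⟨x, y, z, h, hprim⟩ := exists_primitive_of_diagIsotropic h
  have hya : IsCoprime y a := by
    refine isCoprime_of_prime_dvd (fun h0 => ha.ne_zero h0.2) fun p hp hpy hpa => ?_
    have hpz : p ∣ z := by
      have hpc : ¬p ∣ c := fun hpc => hp.not_isUnit (hac.isUnit_of_dvd' hpa hpc)
      refine hp.dvd_of_dvd_pow (n := 2) ((hp.dvd_or_dvd ?_).resolve_left hpc)
      rw [show c * z ^ 2 = -(a * x ^ 2) - b * y ^ 2 by linear_combination h]
      exact dvd_sub (dvd_neg.mpr (hpa.mul_right _)) ((dvd_pow hpy two_ne_zero).mul_left _)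
    have hpx : ¬p ∣ x := fun hpx => hp.not_isUnit (hprim p hpx hpy hpz)
    have hp2 : p ^ 2 ∣ a * x ^ 2 := by
      rw [show a * x ^ 2 = -(b * y ^ 2 + c * z ^ 2) by linear_combination h]
      exact dvd_neg.mpr (dvd_add ((pow_dvd_pow_of_dvd hpy 2).mul_left _)
        ((pow_dvd_pow_of_dvd hpz 2).mul_left _))
    have : p ^ 2 ∣ a := ((hp.coprime_iff_not_dvd.mpr hpx).pow).dvd_of_dvd_mul_right hp2
    exact hp.not_isUnit (ha p (by rwa [← sq]))
  obtain ⟨u, v, huv⟩ := hya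
  -- `u` inverts `y` modulo `a`, and `b y² ≡ -c z² (mod a)`, so `-bc ≡ (c z u)²`.
  exact ⟨c * z * u, -(c * u ^ 2 * x ^ 2) + b * c * v * (1 + u * y),
    by linear_combination c * u ^ 2 * h - b * c * (1 + u * y) * huv⟩

theorem not_diagIsotropic_of_pos (ha : 0 < a) (hb : 0 < b) (hc : 0 < c) :
    ¬DiagIsotropic a b c := by
  rintro ⟨x, y, z, hxyz, h⟩
  have hx : 0 ≤ a * x ^ 2 := by positivity
  have hy : 0 ≤ b * y ^ 2 := by positivity
  have hz : 0 ≤ c * z ^ 2 := by positivity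
  refine hxyz ⟨?_, ?_, ?_⟩
  · simpa [ha.ne'] using (show a * x ^ 2 = 0 by linarith)
  · simpa [hb.ne'] using (show b * y ^ 2 = 0 by linarith)
  · simpa [hc.ne'] using (show c * z ^ 2 = 0 by linarith)

theorem legendreConditions_of_diagIsotropic (hsq : Squarefree (a * b * c))
    (h : DiagIsotropic a b c) :
    (¬(0 < a ∧ 0 < b ∧ 0 < c) ∧ ¬(a < 0 ∧ b < 0 ∧ c < 0)) ∧ LegendreConditions a b c := by
  have hsq' (m : ℤ) (hm : m ∣ a * b * c) : Squarefree m := hsq.squarefree_of_dvd hm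
  refine ⟨⟨fun ⟨ha, hb, hc⟩ => not_diagIsotropic_of_pos ha hb hc h,
    fun ⟨ha, hb, hc⟩ => not_diagIsotropic_of_pos (neg_pos.2 ha) (neg_pos.2 hb) (neg_pos.2 hc)
      h.neg⟩, ?_, ?_, ?_⟩
  · exact exists_sq_add_mul_dvd_of_diagIsotropic (hsq' a ⟨b * c, by ring⟩)
      (isCoprime_of_squarefree_mul (hsq' (a * c) ⟨b, by ring⟩)) h
  · exact exists_sq_add_mul_dvd_of_diagIsotropic (hsq' b ⟨a * c, by ring⟩)
      (isCoprime_of_squarefree_mul (hsq' (b * a) ⟨c, by ring⟩)) h.rotate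
  · exact exists_sq_add_mul_dvd_of_diagIsotropic (hsq' c ⟨a * b, by ring⟩)
      (isCoprime_of_squarefree_mul (hsq' (c * b) ⟨a, by ring⟩)) h.rotate.rotate

theorem dvd_mul_sq_add_mul_sq_of_dvd {m u v r y z : ℤ} (hr : m ∣ r ^ 2 + u * v)
    (hmu : IsCoprime m u) (hL : m ∣ u * y - r * z) : m ∣ u * y ^ 2 + v * z ^ 2 := by
  refine hmu.dvd_of_dvd_mul_left ?_
  rw [show u * (u * y ^ 2 + v * z ^ 2) = (u * y - r * z) * (u * y + r * z) + (r ^ 2 + u * v) * z ^ 2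
    by ring]
  exact dvd_add (hL.mul_right _) (hr.mul_right _)

theorem exists_ne_zero_abs_le_of_card_lt {G : Type*} [AddGroup G] [Fintype G]
    (f : ℤ × ℤ × ℤ →+ G) (A B C : ℕ) (hcard : Fintype.card G < (A + 1) * (B + 1) * (C + 1)) :
    ∃ x y z : ℤ, ¬(x = 0 ∧ y = 0 ∧ z = 0) ∧ f (x, y, z) = 0 ∧
      |x| ≤ A ∧ |y| ≤ B ∧ |z| ≤ C := by
  let box := Finset.range (A + 1) ×ˢ Finset.range (B + 1) ×ˢ Finset.range (C + 1)
  obtain ⟨p, hp, q, hq, hpq, hfpq⟩ := Finset.exists_ne_map_eq_of_card_lt_of_maps_to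
    (s := box) (t := Finset.univ) (by simpa [box, mul_assoc] using hcard)
    (f := fun p : ℕ × ℕ × ℕ => f (p.1, p.2.1, p.2.2))
    fun _ _ => Finset.mem_coe.2 (Finset.mem_univ _)
  simp only [box, Finset.mem_product, Finset.mem_range] at hp hq
  refine ⟨p.1 - q.1, p.2.1 - q.2.1, p.2.2 - q.2.2, fun h => hpq ?_, ?_,
    abs_le.2 ⟨by omega, by omega⟩, abs_le.2 ⟨by omega, by omega⟩, abs_le.2 ⟨by omega, by omega⟩⟩
  · ext <;> omega
  · rwa [← sub_eq_zero, ← map_sub, Prod.mk_sub_mk, Prod.mk_sub_mk] at hfpq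

theorem sq_le_of_abs_le_sqrt {x : ℤ} {n : ℕ} (h : |x| ≤ Nat.sqrt n) : x ^ 2 ≤ n := by
  rw [← sq_abs]
  calc |x| ^ 2 ≤ (Nat.sqrt n : ℤ) ^ 2 := pow_le_pow_left₀ (abs_nonneg x) h 2
    _ ≤ n := by exact_mod_cast Nat.sqrt_le' n

theorem natAbs_mul_mul_lt_sqrt_succ_mul (a b c : ℤ) :
    a.natAbs * (b.natAbs * c.natAbs) < (Nat.sqrt (b * c).natAbs + 1) *
      (Nat.sqrt (c * a).natAbs + 1) * (Nat.sqrt (a * b).natAbs + 1) := by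
  refine lt_of_pow_lt_pow_left₀ 2 (Nat.zero_le _) ?_
  calc (a.natAbs * (b.natAbs * c.natAbs)) ^ 2
      = (b * c).natAbs * (c * a).natAbs * (a * b).natAbs := by
        simp only [Int.natAbs_mul]; ring
    _ < (Nat.sqrt (b * c).natAbs + 1) ^ 2 * (Nat.sqrt (c * a).natAbs + 1) ^ 2 *
        (Nat.sqrt (a * b).natAbs + 1) ^ 2 :=
      Nat.mul_lt_mul'' (Nat.mul_lt_mul'' (Nat.lt_succ_sqrt' _) (Nat.lt_succ_sqrt' _))
        (Nat.lt_succ_sqrt' _)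
    _ = _ := by ring

theorem exists_small_of_legendreConditions (hsq : Squarefree (a * b * c))
    (hL : LegendreConditions a b c) :
    ∃ x y z : ℤ, ¬(x = 0 ∧ y = 0 ∧ z = 0) ∧ x ^ 2 ≤ |b * c| ∧ y ^ 2 ≤ |c * a| ∧
      z ^ 2 ≤ |a * b| ∧ a * b * c ∣ a * x ^ 2 + b * y ^ 2 + c * z ^ 2 := by
  obtain ⟨⟨r, hr⟩, ⟨s, hs⟩, ⟨t, ht⟩⟩ := hL
  have hcop (m n : ℤ) (h : m * n ∣ a * b * c) : IsCoprime m n :=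
    isCoprime_of_squarefree_mul (hsq.squarefree_of_dvd h)
  have : NeZero a.natAbs := ⟨by simp [left_ne_zero_of_mul (left_ne_zero_of_mul hsq.ne_zero)]⟩
  have : NeZero b.natAbs := ⟨by simp [right_ne_zero_of_mul (left_ne_zero_of_mul hsq.ne_zero)]⟩
  have : NeZero c.natAbs := ⟨by simp [right_ne_zero_of_mul hsq.ne_zero]⟩
  -- `a ∣ b y - r z` makes `a` divide `b y² + c z²`, and cyclically for `b` and `c`
  let f : ℤ × ℤ × ℤ →+ ZMod a.natAbs × ZMod b.natAbs × ZMod c.natAbs := AddMonoidHom.mk'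
    (fun v => (((b * v.2.1 - r * v.2.2 : ℤ) : ZMod a.natAbs),
      ((c * v.2.2 - s * v.1 : ℤ) : ZMod b.natAbs), ((a * v.1 - t * v.2.1 : ℤ) : ZMod c.natAbs)))
    (fun v w => by
      simp only [Prod.ext_iff, Prod.fst_add, Prod.snd_add]
      push_cast
      exact ⟨by ring, by ring, by ring⟩)
  have hcard : Fintype.card (ZMod a.natAbs × ZMod b.natAbs × ZMod c.natAbs) <
      (Nat.sqrt (b * c).natAbs + 1) * (Nat.sqrt (c * a).natAbs + 1) *
        (Nat.sqrt (a * b).natAbs + 1) := by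
    rw [Fintype.card_prod, Fintype.card_prod, ZMod.card, ZMod.card, ZMod.card]
    exact natAbs_mul_mul_lt_sqrt_succ_mul a b c
  obtain ⟨x, y, z, hxyz, hf, hx, hy, hz⟩ := exists_ne_zero_abs_le_of_card_lt f _ _ _ hcard
  simp only [f, AddMonoidHom.mk'_apply, Prod.mk_eq_zero, ZMod.intCast_zmod_eq_zero_iff_dvd,
    Int.natAbs_dvd] at hf
  obtain ⟨ha, hb, hc⟩ := hf
  refine ⟨x, y, z, hxyz, ?_, ?_, ?_, ?_⟩
  · simpa using sq_le_of_abs_le_sqrt hx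
  · simpa using sq_le_of_abs_le_sqrt hy
  · simpa using sq_le_of_abs_le_sqrt hz
  have ha' := dvd_mul_sq_add_mul_sq_of_dvd hr (hcop a b ⟨c, rfl⟩) ha
  have hb' := dvd_mul_sq_add_mul_sq_of_dvd hs (hcop b c ⟨a, by ring⟩) hb
  have hc' := dvd_mul_sq_add_mul_sq_of_dvd ht (hcop c a ⟨b, by ring⟩) hc
  refine (hcop (a * b) c dvd_rfl).mul_dvd ((hcop a b ⟨c, rfl⟩).mul_dvd ?_ ?_) ?_
  · rw [add_assoc]
    exact dvd_add (dvd_mul_right _ _) ha'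
  · rw [show a * x ^ 2 + b * y ^ 2 + c * z ^ 2 = b * y ^ 2 + (c * z ^ 2 + a * x ^ 2) by ring]
    exact dvd_add (dvd_mul_right _ _) hb'
  · exact dvd_add hc' (dvd_mul_right _ _)

theorem diagIsotropic_of_eq_neg_mul {x y z : ℤ} (hab : 0 < a * b)
    (h : a * x ^ 2 + b * y ^ 2 + c * z ^ 2 = -(a * b * c)) : DiagIsotropic a b c := by
  -- `a (x z + b y)² + b (y z - a x)² = (a x² + b y²) (z² + a b)`
  refine ⟨x * z + b * y, y * z - a * x, z ^ 2 + a * b, fun h0 => ?_, ?_⟩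
  · have : 0 < z ^ 2 + a * b := by positivity
    exact this.ne' h0.2.2
  · linear_combination (z ^ 2 + a * b) * h

theorem diagIsotropic_one_one_of_dvd {c : ℤ} (hc : c < 0) (h : ∃ t, c ∣ t ^ 2 + 1) :
    DiagIsotropic 1 1 c := by
  obtain ⟨t, ht⟩ := h
  have hsq : IsSquare (-1 : ZMod c.natAbs) := by
    refine ⟨t, ?_⟩
    have := (ZMod.intCast_zmod_eq_zero_iff_dvd (t ^ 2 + 1) c.natAbs).2 (Int.natAbs_dvd.2 ht)
    push_cast at this
    linear_combination -this
  obtain ⟨x, y, hxy⟩ := Nat.eq_sq_add_sq_of_isSquare_mod_neg_one hsq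
  have hc' : (c.natAbs : ℤ) = -c := Int.ofNat_natAbs_of_nonpos hc.le
  rw [hxy] at hc'
  push_cast at hc'
  exact ⟨x, y, 1, by simp, by linear_combination hc'⟩

theorem diagIsotropic_of_pos_of_pos_of_neg (ha : 0 < a) (hb : 0 < b) (hc : c < 0)
    (hsq : Squarefree (a * b * c)) (hL : LegendreConditions a b c) : DiagIsotropic a b c := by
  by_cases hab : a * b = 1
  · obtain rfl := Int.eq_one_of_mul_eq_one_right ha.le hab
    obtain rfl : b = 1 := by simpa using hab
    exact diagIsotropic_one_one_of_dvd hc (by simpa using hL.2.2)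
  obtain ⟨x, y, z, hxyz, hx, hy, hz, q, hq⟩ := exists_small_of_legendreConditions hsq hL
  rw [abs_of_neg (mul_neg_of_pos_of_neg hb hc)] at hx
  rw [abs_of_neg (mul_neg_of_neg_of_pos hc ha)] at hy
  rw [abs_of_pos (mul_pos ha hb)] at hz
  have hax := mul_le_mul_of_nonneg_left hx ha.le
  have hby := mul_le_mul_of_nonneg_left hy hb.le
  have hcz := mul_le_mul_of_nonpos_left hz hc.le
  have hax0 : 0 ≤ a * x ^ 2 := by positivity
  have hby0 : 0 ≤ b * y ^ 2 := by positivity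
  have hcz0 : c * z ^ 2 ≤ 0 := mul_nonpos_of_nonpos_of_nonneg hc.le (sq_nonneg z)
  have habc : a * b * c < 0 := mul_neg_of_pos_of_neg (mul_pos ha hb) hc
  have hq1 : q ≤ 1 := by nlinarith
  have hq2 : -2 ≤ q := by nlinarith
  -- `a x² + b y² + c z²` is a multiple of `abc` in `[abc, -2abc]`;
  -- the extreme multiples force `a = b = 1`
  interval_cases q
  · have hx' : x ^ 2 = -(b * c) := mul_left_cancel₀ ha.ne' (by linarith)
    have hy' : y ^ 2 = -(c * a) := mul_left_cancel₀ hb.ne' (by linarith)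
    have hbc := Int.eq_one_of_squarefree_of_sq_eq (hsq.squarefree_of_dvd ⟨-a, by ring⟩) hx'
    have hca := Int.eq_one_of_squarefree_of_sq_eq (hsq.squarefree_of_dvd ⟨-b, by ring⟩) hy'
    obtain rfl := Int.eq_one_of_mul_eq_one_right ha.le (show a * -c = 1 by linarith)
    obtain rfl := Int.eq_one_of_mul_eq_one_right hb.le (show b * -c = 1 by linarith)
    exact absurd (one_mul 1) hab
  · rw [mul_neg_one] at hq
    exact diagIsotropic_of_eq_neg_mul (mul_pos ha hb) hq
  · exact ⟨x, y, z, hxyz, by simpa using hq⟩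
  · have hz' : z ^ 2 = a * b := mul_left_cancel₀ hc.ne (by linarith)
    exact absurd (Int.eq_one_of_squarefree_of_sq_eq (hsq.squarefree_of_dvd ⟨c, rfl⟩) hz') hab

theorem diagIsotropic_of_legendreConditions (hsq : Squarefree (a * b * c))
    (hpos : ¬(0 < a ∧ 0 < b ∧ 0 < c)) (hneg : ¬(a < 0 ∧ b < 0 ∧ c < 0))
    (hL : LegendreConditions a b c) : DiagIsotropic a b c := by
  have hmixed {a b c : ℤ} (hsq : Squarefree (a * b * c)) (hL : LegendreConditions a b c)
      (h : 0 < a ∧ 0 < b ∧ c < 0 ∨ a < 0 ∧ b < 0 ∧ 0 < c) : DiagIsotropic a b c := by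
    rcases h with ⟨ha, hb, hc⟩ | ⟨ha, hb, hc⟩
    · exact diagIsotropic_of_pos_of_pos_of_neg ha hb hc hsq hL
    · simpa using (diagIsotropic_of_pos_of_pos_of_neg (neg_pos.2 ha) (neg_pos.2 hb)
        (neg_lt_zero.2 hc) (hsq.squarefree_of_dvd ⟨-1, by ring⟩) hL.neg).neg
  have hbca : Squarefree (b * c * a) := hsq.squarefree_of_dvd ⟨1, by ring⟩
  have hcab : Squarefree (c * a * b) := hsq.squarefree_of_dvd ⟨1, by ring⟩
  have ha := left_ne_zero_of_mul (left_ne_zero_of_mul hsq.ne_zero)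
  have hb := right_ne_zero_of_mul (left_ne_zero_of_mul hsq.ne_zero)
  have hc := right_ne_zero_of_mul hsq.ne_zero
  -- rotate the coefficient of odd sign into the last position
  rcases ha.lt_or_gt with ha | ha <;> rcases hb.lt_or_gt with hb | hb <;>
    rcases hc.lt_or_gt with hc | hc <;>
    first
    | exact hmixed hsq hL (by tauto)
    | exact (hmixed hbca hL.rotate (by tauto)).rotate.rotate
    | exact (hmixed hcab hL.rotate.rotate (by tauto)).rotate

theorem diagIsotropic_iff_legendreConditions (hsq : Squarefree (a * b * c)) :
    DiagIsotropic a b c ↔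
      (¬(0 < a ∧ 0 < b ∧ 0 < c) ∧ ¬(a < 0 ∧ b < 0 ∧ c < 0)) ∧ LegendreConditions a b c :=
  ⟨legendreConditions_of_diagIsotropic hsq,
    fun ⟨⟨hpos, hneg⟩, hL⟩ => diagIsotropic_of_legendreConditions hsq hpos hneg hL⟩

end

theorem diagIsotropic_one_mul_mul_iff {d b c : ℤ} (hd : Squarefree d) :
    DiagIsotropic 1 (d * b) (d * c) ↔ DiagIsotropic d b c := by
  constructor
  · rintro ⟨x, y, z, hxyz, h⟩
    obtain ⟨X, rfl⟩ : d ∣ x := (hd.dvd_pow_iff_dvd two_ne_zero).1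
      ⟨-(b * y ^ 2 + c * z ^ 2), by linear_combination h⟩
    refine ⟨X, y, z, fun ⟨hX, hy, hz⟩ => hxyz ⟨by simp [hX], hy, hz⟩, ?_⟩
    exact mul_left_cancel₀ hd.ne_zero (by linear_combination h)
  · rintro ⟨x, y, z, hxyz, h⟩
    refine ⟨d * x, y, z, fun ⟨hx, hy, hz⟩ => hxyz ⟨?_, hy, hz⟩, by linear_combination d * h⟩
    simpa [hd.ne_zero] using hx

theorem exists_rat_eq_sq_sub_mul_sq_iff {z w : ℤ} (hz : ¬IsSquare z) (hw : w ≠ 0) :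
    (∃ a b : ℚ, ¬(a = 0 ∧ b = 0) ∧ (w : ℚ) = a ^ 2 - (z : ℚ) * b ^ 2) ↔
      DiagIsotropic 1 (-z) (-w) := by
  constructor
  · rintro ⟨a, b, -, h⟩
    refine ⟨a.num * b.den, b.num * a.den, a.den * b.den, fun h0 => ?_, ?_⟩
    · simp [a.den_nz, b.den_nz] at h0
    · have hq : ((1 * (a.num * b.den) ^ 2 + -z * (b.num * a.den) ^ 2 +
          -w * ((a.den : ℤ) * b.den) ^ 2 : ℤ) : ℚ) = 0 := by
        push_cast
        rw [← a.mul_den_eq_num, ← b.mul_den_eq_num, h]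
        ring
      exact_mod_cast hq
  · rintro ⟨x, y, t, hxyt, h⟩
    have ht : t ≠ 0 := by
      rintro rfl
      have hy : y ≠ 0 := by
        rintro rfl
        exact hxyt ⟨by simpa using h, rfl, rfl⟩
      refine hz (Rat.isSquare_intCast_iff.1 ⟨x / y, ?_⟩)
      field_simp
      exact_mod_cast (show _ = _ by linear_combination -h)
    refine ⟨x / t, y / t, fun ⟨hx, hy⟩ => ?_, ?_⟩
    · obtain rfl : x = 0 := by simpa [ht] using hx
      obtain rfl : y = 0 := by simpa [ht] using hy
      simp [hw, ht] at h
    · field_simp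
      exact_mod_cast (show _ = _ by linear_combination -h)

theorem squarefree_mul_mul_of_eq_gcd {d m n : ℤ} (hd0 : 0 < d)
    (hd : d = Int.gcd (d * m) (d * n)) (hm : Squarefree (d * m)) (hn : Squarefree (d * n)) :
    Squarefree (d * m * n) := by
  rw [Int.gcd_mul_left, Nat.cast_mul, Int.natCast_natAbs, abs_of_pos hd0] at hd
  have hmn : IsCoprime m n := Int.isCoprime_iff_gcd_eq_one.2
    (by exact_mod_cast (mul_eq_left₀ hd0.ne').1 hd.symm)
  exact squarefree_mul_iff.2
    ⟨((isCoprime_of_squarefree_mul hn).mul_left hmn).isRelPrime, hm, hn.of_mul_right⟩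

theorem norm_iff_legendre_conditions_general (z w : ℤ)
    (hz : Squarefree z) (hz1 : z ≠ 1) (hw : Squarefree w)
    (d : ℤ) (hd : d = Int.gcd z w) :
    (∃ a b : ℚ, ¬(a = 0 ∧ b = 0) ∧ (w : ℚ) = a ^ 2 - (z : ℚ) * b ^ 2) ↔
      (¬(z < 0 ∧ w < 0) ∧
       (∃ y : ℤ, (w / d) ∣ (y ^ 2 - z)) ∧
       (∃ y : ℤ, (z / d) ∣ (y ^ 2 - w)) ∧
       (∃ y : ℤ, d ∣ (y ^ 2 + (z / d) * (w / d)))) := by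
  have hnsq : ¬IsSquare z := fun ⟨k, hk⟩ =>
    hz1 (Int.eq_one_of_squarefree_of_sq_eq hz (by rw [hk, sq]))
  have hd0 : 0 < d := hd ▸ Int.natCast_pos.2 (Int.gcd_pos_of_ne_zero_left w hz.ne_zero)
  obtain ⟨z₁, rfl⟩ : d ∣ z := hd ▸ Int.gcd_dvd_left _ _
  obtain ⟨w₁, rfl⟩ : d ∣ w := hd ▸ Int.gcd_dvd_right _ _
  have hsq : Squarefree (d * -z₁ * -w₁) := by
    simpa only [mul_neg, neg_mul, neg_neg] using squarefree_mul_mul_of_eq_gcd hd0 hd hz hw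
  rw [exists_rat_eq_sq_sub_mul_sq_iff hnsq hw.ne_zero, neg_mul_eq_mul_neg, neg_mul_eq_mul_neg,
    diagIsotropic_one_mul_mul_iff hz.of_mul_left, diagIsotropic_iff_legendreConditions hsq,
    Int.mul_ediv_cancel_left _ hd0.ne', Int.mul_ediv_cancel_left _ hd0.ne']
  simp only [LegendreConditions, neg_pos, neg_lt_zero, neg_dvd, mul_neg_iff, hd0, hd0.not_gt,
    true_and, false_and, or_false, not_false_eq_true, and_true, neg_mul, mul_neg,
    ← sub_eq_add_neg, sub_neg_eq_add, mul_comm w₁ d]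
  tauto

/-- w ∈ n_{ℚ(√z)/ℚ}(ℓ*) iff z, w are not both negative, z is a square
mod w/d, w is a square mod z/d and -zw/d² is a square mod d, where d = gcd(z,w). -/
theorem norm_iff_legendre_conditions (z w : ℤ)
    (hz : Squarefree z) (hz1 : z ≠ 1) (hw : Squarefree w) (hw1 : w ≠ 1)
    (d : ℤ) (hd : d = Int.gcd z w) :
    (∃ a b : ℚ, ¬(a = 0 ∧ b = 0) ∧ (w : ℚ) = a ^ 2 - (z : ℚ) * b ^ 2) ↔
      (¬(z < 0 ∧ w < 0) ∧
       (∃ y : ℤ, (w / d) ∣ (y ^ 2 - z)) ∧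
       (∃ y : ℤ, (z / d) ∣ (y ^ 2 - w)) ∧
       (∃ y : ℤ, d ∣ (y ^ 2 + (z / d) * (w / d)))) :=
  norm_iff_legendre_conditions_general z w hz hz1 hw d hd
end

section
/- The set T = {z ∈ Z : every prime dividing z is ≡ 3 (mod 4)} is a transversal of the nontrivial cosets of Q₂* = Q₂ \ {0} (nonzero sums of two rational squares) in ℚ*: every coset of Q₂* other than Q₂* itself contains exactly one element of T. -/
/-!
The nonzero sums of two rational squares form a group: it is closed under products by the
Brahmagupta identity and under inverses since `a⁻¹ = a / a²`. Clearing denominators and the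
two-squares theorem show that a natural number lies in it iff every prime `p ≡ 3 (mod 4)` divides
it to an even power.

Existence: write `|num q| · den q = k² s` with `s` squarefree and split `s` into the product `t`
of its prime factors `≡ 3 (mod 4)` and the product of the others, which is a sum of two squares;
then `q = ± t · (k² (s / t) / den q²)`.
Uniqueness: if `z₁ h₁ = z₂ h₂` then `z₁ z₂ = z₂² h₂ / h₁` is a nonzero sum of two squares, so
`z₁ z₂ > 0` and every prime `≡ 3 (mod 4)` divides `|z₁| |z₂|` to an even power; as `z₁` and `z₂`
are squarefree products of such primes, `|z₁| = |z₂|`.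
-/

def IsSumTwoSq {R : Type*} [Semiring R] (a : R) : Prop :=
  ∃ x y : R, a = x ^ 2 + y ^ 2

section IsSumTwoSq

variable {R S K : Type*}

theorem IsSumTwoSq.map [Semiring R] [Semiring S] {a : R} (f : R →+* S) (ha : IsSumTwoSq a) :
    IsSumTwoSq (f a) := by
  obtain ⟨x, y, rfl⟩ := ha
  exact ⟨f x, f y, by simp⟩

theorem IsSumTwoSq.sq_mul [CommSemiring R] {a : R} (ha : IsSumTwoSq a) (c : R) :
    IsSumTwoSq (c ^ 2 * a) := by
  obtain ⟨x, y, rfl⟩ := ha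
  exact ⟨c * x, c * y, by ring⟩

theorem IsSumTwoSq.mul [CommRing R] {a b : R} (ha : IsSumTwoSq a) (hb : IsSumTwoSq b) :
    IsSumTwoSq (a * b) := by
  obtain ⟨x, y, hxy⟩ := ha
  obtain ⟨u, v, huv⟩ := hb
  exact sq_add_sq_mul hxy huv

theorem IsSumTwoSq.inv [Field K] {a : K} (ha : IsSumTwoSq a) : IsSumTwoSq a⁻¹ := by
  obtain ⟨x, y, rfl⟩ := ha
  refine ⟨x / (x ^ 2 + y ^ 2), y / (x ^ 2 + y ^ 2), ?_⟩
  rw [div_pow, div_pow, ← add_div, sq (x ^ 2 + y ^ 2), div_self_mul_self']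

theorem IsSumTwoSq.nonneg [Ring R] [LinearOrder R] [IsStrictOrderedRing R] {a : R}
    (ha : IsSumTwoSq a) : 0 ≤ a := by
  obtain ⟨x, y, rfl⟩ := ha
  positivity

end IsSumTwoSq

namespace Nat

theorem even_factorization_of_isSumTwoSq {n p : ℕ} (hn : IsSumTwoSq n) (hp : p % 4 = 3) :
    Even (n.factorization p) := by
  by_cases hpn : p ∈ n.primeFactors
  · rw [factorization_def n (prime_of_mem_primeFactors hpn)]
    exact eq_sq_add_sq_iff.mp hn p hpn hp
  · rw [← support_factorization, Finsupp.notMem_support_iff] at hpn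
    rw [hpn]
    exact Even.zero

theorem isSumTwoSq_of_mul_sq {n d : ℕ} (hd : d ≠ 0) (h : IsSumTwoSq (n * d ^ 2)) :
    IsSumTwoSq n := by
  rcases eq_or_ne n 0 with rfl | hn
  · exact ⟨0, 0, rfl⟩
  refine eq_sq_add_sq_iff.mpr fun p hp hp3 => ?_
  have : Fact p.Prime := ⟨prime_of_mem_primeFactors hp⟩
  have hpnd : p ∈ (n * d ^ 2).primeFactors :=
    primeFactors_mono (dvd_mul_right n _) (by positivity) hp
  have := eq_sq_add_sq_iff.mp h p hpnd hp3
  rw [padicValNat.mul hn (by positivity), padicValNat.pow] at this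
  simpa [parity_simps] using this

theorem exists_eq_mul_isSumTwoSq (n : ℕ) :
    ∃ t m : ℕ, n = t * m ∧ Squarefree t ∧ (∀ p ∈ t.primeFactors, p % 4 = 3) ∧ IsSumTwoSq m := by
  obtain ⟨s, k, rfl, hs⟩ := sq_mul_squarefree n
  have hsplit := Finset.prod_filter_mul_prod_filter_not s.primeFactors (· % 4 = 3) (fun p => p)
  rw [prod_primeFactors_of_squarefree hs] at hsplit
  set t := ∏ p ∈ s.primeFactors with p % 4 = 3, p
  set r := ∏ p ∈ s.primeFactors with ¬p % 4 = 3, p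
  have hprimes (P : ℕ → Prop) [DecidablePred P] : ∀ p ∈ s.primeFactors.filter P, p.Prime :=
    fun p hp => prime_of_mem_primeFactors (Finset.mem_filter.mp hp).1
  have hr : IsSumTwoSq r := eq_sq_add_sq_iff.mpr fun p hp hp3 => by
    rw [primeFactors_prod (hprimes _)] at hp
    exact absurd hp3 (Finset.mem_filter.mp hp).2
  refine ⟨t, k ^ 2 * r, by rw [← hsplit]; ring, hs.squarefree_of_dvd ⟨r, hsplit.symm⟩,
    fun p hp => ?_, hr.sq_mul k⟩
  rw [primeFactors_prod (hprimes _)] at hp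
  exact (Finset.mem_filter.mp hp).2

theorem eq_of_isSumTwoSq_mul {a b : ℕ} (ha : Squarefree a) (hb : Squarefree b)
    (ha3 : ∀ p ∈ a.primeFactors, p % 4 = 3) (hb3 : ∀ p ∈ b.primeFactors, p % 4 = 3)
    (hab : IsSumTwoSq (a * b)) : a = b := by
  refine eq_of_factorization_eq ha.ne_zero hb.ne_zero fun p => ?_
  have ha1 := ha.natFactorization_le_one p
  have hb1 := hb.natFactorization_le_one p
  have heven : Even (a.factorization p + b.factorization p) := by
    by_cases hp3 : p % 4 = 3
    · simpa [factorization_mul ha.ne_zero hb.ne_zero] using even_factorization_of_isSumTwoSq hab hp3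
    · have hzero {c : ℕ} (hc : ∀ p ∈ c.primeFactors, p % 4 = 3) : c.factorization p = 0 :=
        Finsupp.notMem_support_iff.mp fun hp => hp3 (hc p (support_factorization c ▸ hp))
      rw [hzero ha3, hzero hb3]
      exact Even.zero
  obtain ⟨k, hk⟩ := heven
  omega

theorem isSumTwoSq_cast_iff {n : ℕ} : IsSumTwoSq (n : ℚ) ↔ IsSumTwoSq n := by
  refine ⟨fun ⟨x, y, hxy⟩ => ?_, fun h => h.map (castRingHom ℚ)⟩
  set d := x.den * y.den
  have hx : x * d = (x.num * y.den : ℤ) := by push_cast [d]; rw [← mul_assoc, Rat.mul_den_eq_num]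
  have hy : y * d = (y.num * x.den : ℤ) := by
    push_cast [d]; rw [mul_left_comm, Rat.mul_den_eq_num, mul_comm]
  refine isSumTwoSq_of_mul_sq (d := d) (by positivity)
    ⟨(x.num * y.den).natAbs, (y.num * x.den).natAbs, ?_⟩
  have : (n * d ^ 2 : ℚ) = (x * d) ^ 2 + (y * d) ^ 2 := by rw [hxy]; ring
  rw [hx, hy] at this
  zify
  rw [sq_abs, sq_abs]
  exact_mod_cast this

end Nat

theorem Rat.exists_eq_intCast_mul_isSumTwoSq {q : ℚ} (hq : q ≠ 0) :
    ∃ z : ℤ, Squarefree z ∧ (∀ p : ℕ, p.Prime → (p : ℤ) ∣ z → p % 4 = 3) ∧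
      ∃ h : ℚ, h ≠ 0 ∧ IsSumTwoSq h ∧ q = z * h := by
  set b := q.den
  set N := q.num * b
  have hN : N ≠ 0 := mul_ne_zero (Rat.num_ne_zero.mpr hq) (by positivity)
  obtain ⟨t, m, htm, ht, ht3, hm⟩ := Nat.exists_eq_mul_isSumTwoSq N.natAbs
  have hm0 : m ≠ 0 := by rintro rfl; simp_all
  have hzt : (N.sign * t).natAbs = t := by
    rw [Int.natAbs_mul, Int.natAbs_sign_of_ne_zero hN, Int.natAbs_natCast, one_mul]
  refine ⟨N.sign * t, Int.squarefree_natAbs.mp (by rwa [hzt]), fun p hp hpz => ?_,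
    (b : ℚ)⁻¹ ^ 2 * m, by positivity, (hm.map (Nat.castRingHom ℚ)).sq_mul _, ?_⟩
  · rw [Int.natCast_dvd, hzt] at hpz
    exact ht3 p (Nat.mem_primeFactors.mpr ⟨hp, hpz, ht.ne_zero⟩)
  · have hNq : (N : ℚ) = N.sign * (t * m) := by
      conv_lhs => rw [← Int.sign_mul_natAbs N, htm]
      push_cast
      ring
    have hqN : q = N / (b : ℚ) ^ 2 := by
      push_cast [N]
      rw [sq, ← div_div, mul_div_cancel_right₀ _ (by positivity), Rat.num_div_den]
    rw [hqN, hNq]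
    push_cast
    ring

theorem Rat.eq_of_intCast_mul_eq_intCast_mul {z₁ z₂ : ℤ} {h₁ h₂ : ℚ}
    (hz₁ : Squarefree z₁) (hz₁3 : ∀ p : ℕ, p.Prime → (p : ℤ) ∣ z₁ → p % 4 = 3)
    (hz₂ : Squarefree z₂) (hz₂3 : ∀ p : ℕ, p.Prime → (p : ℤ) ∣ z₂ → p % 4 = 3)
    (hh₁ : h₁ ≠ 0) (hs₁ : IsSumTwoSq h₁) (hs₂ : IsSumTwoSq h₂)
    (he : (z₁ : ℚ) * h₁ = z₂ * h₂) : z₁ = z₂ := by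
  have hprod : IsSumTwoSq ((z₁ * z₂ : ℤ) : ℚ) := by
    have : ((z₁ * z₂ : ℤ) : ℚ) = (z₂ : ℚ) ^ 2 * (h₂ * h₁⁻¹) := by
      push_cast
      field_simp
      linear_combination (z₂ : ℚ) * he
    exact this ▸ (hs₂.mul hs₁.inv).sq_mul _
  have hpos : 0 < z₁ * z₂ := by
    refine lt_of_le_of_ne (by exact_mod_cast hprod.nonneg) ?_
    exact (mul_ne_zero hz₁.ne_zero hz₂.ne_zero).symm
  have habs : z₁.natAbs = z₂.natAbs := by
    have hcast : ((z₁ * z₂ : ℤ) : ℚ) = ((z₁.natAbs * z₂.natAbs : ℕ) : ℚ) := by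
      rw [← Int.natAbs_mul, Nat.cast_natAbs, abs_of_pos hpos]
    have hT {z : ℤ} (hz : ∀ p : ℕ, p.Prime → (p : ℤ) ∣ z → p % 4 = 3) :
        ∀ p ∈ z.natAbs.primeFactors, p % 4 = 3 := fun p hp =>
      hz p (Nat.prime_of_mem_primeFactors hp) (Int.natCast_dvd.mpr (Nat.dvd_of_mem_primeFactors hp))
    exact Nat.eq_of_isSumTwoSq_mul (Int.squarefree_natAbs.mpr hz₁) (Int.squarefree_natAbs.mpr hz₂)
      (hT hz₁3) (hT hz₂3) (Nat.isSumTwoSq_cast_iff.mp (hcast ▸ hprod))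
  rcases Int.natAbs_eq_natAbs_iff.mp habs with h | h
  · exact h
  · nlinarith

/-- T = {z ∈ Z : every prime dividing z is ≡ 3 mod 4} is a transversal
of the nontrivial cosets of Q₂* (nonzero sums of two rational squares) in ℚ*. -/
theorem transversal_sum_two_squares :
    ∀ q : ℚ, q ≠ 0 → ¬(∃ x y : ℚ, q = x ^ 2 + y ^ 2) →
      ∃! z : ℤ, (Squarefree z ∧ z ≠ 1 ∧
          (∀ p : ℕ, p.Prime → (p : ℤ) ∣ z → p % 4 = 3)) ∧
        ∃ h : ℚ, h ≠ 0 ∧ (∃ x y : ℚ, h = x ^ 2 + y ^ 2) ∧ q = (z : ℚ) * h := by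
  intro q hq hq₂
  obtain ⟨z, hz, hz3, h, hh, hs, rfl⟩ := Rat.exists_eq_intCast_mul_isSumTwoSq hq
  refine ⟨z, ⟨⟨hz, ?_, hz3⟩, h, hh, hs, rfl⟩, ?_⟩
  · rintro rfl
    exact hq₂ (by rwa [Int.cast_one, one_mul])
  · rintro z' ⟨⟨hz', -, hz'3⟩, h', -, hs', he⟩
    exact (Rat.eq_of_intCast_mul_eq_intCast_mul hz hz3 hz' hz'3 hh hs hs' he).symm
end

section
/- Let z be a square-free integer divisible by a prime p ≡ 3 (mod 4), and let c₁, c₂, c₃ ∈ ℤ satisfy 1-2c₁ ≡ 1 (mod p), c₂ ≡ -1 (mod p), c₃ ≡ 0 (mod p). Then the system { x₁² + z(1-2c₁)x₂² - (c₂+c₃)y₁² + z(c₃-c₂)y₂² = 0 ; (1-c₁)x₁x₂ = c₂y₁y₂ } has no primitive integral solution (i.e., no solution (x₁,x₂,y₁,y₂) ∈ ℤ⁴ with gcd(x₁,x₂,y₁,y₂) = 1), and hence only the trivial rational solution. -/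
/-!
Modulo `p` the equation reduces to `x₁² + y₁² ≡ 0`; as `-1` is not a square mod `p ≡ 3 (mod 4)`,
`p ∣ x₁, y₁`. Substituting and dividing by `p`, which divides the square-free `z` exactly once,
leaves `(z / p)(x₂² + y₂²) ≡ 0`, so `p ∣ x₂, y₂` as well. By homogeneity the quotient by `p` is
again a solution, so every coordinate of an integral solution is divisible by all powers of `p`,
hence zero; rational solutions reduce to integral ones by clearing denominators.
-/

theorem Int.dvd_of_dvd_sq_add_sq {p : ℕ} [Fact p.Prime] (hp4 : p % 4 = 3) {a b : ℤ}
    (h : (p : ℤ) ∣ a ^ 2 + b ^ 2) : (p : ℤ) ∣ a ∧ (p : ℤ) ∣ b := by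
  simp only [← ZMod.intCast_zmod_eq_zero_iff_dvd] at h ⊢
  push_cast at h
  have hb : (b : ZMod p) = 0 := by
    by_contra hb
    exact ZMod.mod_four_ne_three_of_sq_eq_neg_sq' hb (eq_neg_of_add_eq_zero_left h) hp4
  rw [hb, zero_pow two_ne_zero, add_zero, pow_eq_zero_iff two_ne_zero] at h
  exact ⟨h, hb⟩

theorem Int.eq_zero_of_forall_pow_dvd {p : ℕ} (hp : 1 < p) {x : ℤ} (h : ∀ k : ℕ, (p : ℤ) ^ k ∣ x) :
    x = 0 :=
  Int.eq_zero_of_dvd_of_natAbs_lt_natAbs (h x.natAbs) (by simpa using Nat.lt_pow_self hp)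

theorem Rat.exists_intCast_eq_mul_of_den_dvd {q : ℚ} {N : ℕ} (h : q.den ∣ N) :
    ∃ n : ℤ, (n : ℚ) = N * q := by
  obtain ⟨k, rfl⟩ := h
  exact ⟨q.num * k, by push_cast; rw [← q.mul_den_eq_num]; ring⟩

def diagForm {R : Type*} [CommRing R] (z A B D x₁ x₂ y₁ y₂ : R) : R :=
  x₁ ^ 2 + z * A * x₂ ^ 2 + B * y₁ ^ 2 + z * D * y₂ ^ 2

section diagForm

variable {R : Type*} [CommRing R]

theorem diagForm_mul (z A B D t x₁ x₂ y₁ y₂ : R) :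
    diagForm z A B D (t * x₁) (t * x₂) (t * y₁) (t * y₂) =
      t ^ 2 * diagForm z A B D x₁ x₂ y₁ y₂ := by
  unfold diagForm; ring

@[simp, norm_cast]
theorem Int.cast_diagForm (z A B D x₁ x₂ y₁ y₂ : ℤ) :
    ((diagForm z A B D x₁ x₂ y₁ y₂ : ℤ) : R) = diagForm (z : R) A B D x₁ x₂ y₁ y₂ := by
  simp [diagForm]

end diagForm

section descent

variable {p : ℕ} [Fact p.Prime] {z A B D x₁ x₂ y₁ y₂ : ℤ}

theorem dvd_of_diagForm_eq_zero_left (hp4 : p % 4 = 3) (hpz : (p : ℤ) ∣ z) (hB : B ≡ 1 [ZMOD p])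
    (h : diagForm z A B D x₁ x₂ y₁ y₂ = 0) : (p : ℤ) ∣ x₁ ∧ (p : ℤ) ∣ y₁ := by
  have hz : z ≡ 0 [ZMOD p] := Int.modEq_zero_iff_dvd.mpr hpz
  apply Int.dvd_of_dvd_sq_add_sq hp4
  rw [← Int.modEq_zero_iff_dvd]
  calc x₁ ^ 2 + y₁ ^ 2 = x₁ ^ 2 + 0 * A * x₂ ^ 2 + 1 * y₁ ^ 2 + 0 * D * y₂ ^ 2 := by ring
    _ ≡ diagForm z A B D x₁ x₂ y₁ y₂ [ZMOD p] := by unfold diagForm; gcongr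
    _ = 0 := h

theorem dvd_of_diagForm_eq_zero_right (hp4 : p % 4 = 3) (hz : Squarefree z) (hpz : (p : ℤ) ∣ z)
    (hA : A ≡ 1 [ZMOD p]) (hD : D ≡ 1 [ZMOD p]) (hx₁ : (p : ℤ) ∣ x₁) (hy₁ : (p : ℤ) ∣ y₁)
    (h : diagForm z A B D x₁ x₂ y₁ y₂ = 0) : (p : ℤ) ∣ x₂ ∧ (p : ℤ) ∣ y₂ := by
  have hp : Prime (p : ℤ) := Nat.prime_iff_prime_int.mp Fact.out
  obtain ⟨m, rfl⟩ := hpz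
  obtain ⟨a, rfl⟩ := hx₁
  obtain ⟨b, rfl⟩ := hy₁
  have hm : ¬ (p : ℤ) ∣ m := fun ⟨t, ht⟩ ↦ hp.not_isUnit (hz p ⟨t, by rw [ht, mul_assoc]⟩)
  have hdiv : (p : ℤ) ∣ m * (A * x₂ ^ 2 + D * y₂ ^ 2) := by
    refine ⟨-(a ^ 2 + B * b ^ 2), mul_left_cancel₀ hp.ne_zero ?_⟩
    unfold diagForm at h
    linear_combination h
  have hS : A * x₂ ^ 2 + D * y₂ ^ 2 ≡ 0 [ZMOD p] :=
    Int.modEq_zero_iff_dvd.mpr ((hp.dvd_mul.mp hdiv).resolve_left hm)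
  apply Int.dvd_of_dvd_sq_add_sq hp4
  rw [← Int.modEq_zero_iff_dvd]
  calc x₂ ^ 2 + y₂ ^ 2 = 1 * x₂ ^ 2 + 1 * y₂ ^ 2 := by ring
    _ ≡ A * x₂ ^ 2 + D * y₂ ^ 2 [ZMOD p] := by gcongr
    _ ≡ 0 [ZMOD p] := hS

theorem pow_dvd_of_diagForm_eq_zero (hp4 : p % 4 = 3) (hz : Squarefree z) (hpz : (p : ℤ) ∣ z)
    (hA : A ≡ 1 [ZMOD p]) (hB : B ≡ 1 [ZMOD p]) (hD : D ≡ 1 [ZMOD p]) (k : ℕ) :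
    ∀ {x₁ x₂ y₁ y₂ : ℤ}, diagForm z A B D x₁ x₂ y₁ y₂ = 0 →
      (p : ℤ) ^ k ∣ x₁ ∧ (p : ℤ) ^ k ∣ x₂ ∧ (p : ℤ) ^ k ∣ y₁ ∧ (p : ℤ) ^ k ∣ y₂ := by
  induction k with
  | zero => simp
  | succ k ih =>
    intro x₁ x₂ y₁ y₂ h
    obtain ⟨⟨a₁, rfl⟩, ⟨b₁, rfl⟩⟩ := dvd_of_diagForm_eq_zero_left hp4 hpz hB h
    obtain ⟨⟨a₂, rfl⟩, ⟨b₂, rfl⟩⟩ :=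
      dvd_of_diagForm_eq_zero_right hp4 hz hpz hA hD (dvd_mul_right _ _) (dvd_mul_right _ _) h
    rw [diagForm_mul] at h
    have hp2 : (p : ℤ) ^ 2 ≠ 0 := pow_ne_zero 2 (mod_cast (Fact.out : p.Prime).ne_zero)
    obtain ⟨h₁, h₂, h₃, h₄⟩ := ih ((mul_eq_zero.mp h).resolve_left hp2)
    simp only [pow_succ']
    exact ⟨mul_dvd_mul_left _ h₁, mul_dvd_mul_left _ h₂, mul_dvd_mul_left _ h₃,
      mul_dvd_mul_left _ h₄⟩

theorem eq_zero_of_diagForm_eq_zero (hp4 : p % 4 = 3) (hz : Squarefree z) (hpz : (p : ℤ) ∣ z)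
    (hA : A ≡ 1 [ZMOD p]) (hB : B ≡ 1 [ZMOD p]) (hD : D ≡ 1 [ZMOD p])
    (h : diagForm z A B D x₁ x₂ y₁ y₂ = 0) : x₁ = 0 ∧ x₂ = 0 ∧ y₁ = 0 ∧ y₂ = 0 := by
  have hp : 1 < p := (Fact.out : p.Prime).one_lt
  have := fun k ↦ pow_dvd_of_diagForm_eq_zero hp4 hz hpz hA hB hD k h
  exact ⟨Int.eq_zero_of_forall_pow_dvd hp fun k ↦ (this k).1,
    Int.eq_zero_of_forall_pow_dvd hp fun k ↦ (this k).2.1,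
    Int.eq_zero_of_forall_pow_dvd hp fun k ↦ (this k).2.2.1,
    Int.eq_zero_of_forall_pow_dvd hp fun k ↦ (this k).2.2.2⟩

end descent

theorem rat_eq_zero_of_diagForm_eq_zero {z A B D : ℤ}
    (hℤ : ∀ {x₁ x₂ y₁ y₂ : ℤ}, diagForm z A B D x₁ x₂ y₁ y₂ = 0 →
      x₁ = 0 ∧ x₂ = 0 ∧ y₁ = 0 ∧ y₂ = 0)
    {x₁ x₂ y₁ y₂ : ℚ} (h : diagForm (z : ℚ) A B D x₁ x₂ y₁ y₂ = 0) :
    x₁ = 0 ∧ x₂ = 0 ∧ y₁ = 0 ∧ y₂ = 0 := by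
  set N := x₁.den * x₂.den * y₁.den * y₂.den
  have hN : (N : ℚ) ≠ 0 := by positivity
  obtain ⟨X₁, hX₁⟩ := Rat.exists_intCast_eq_mul_of_den_dvd (q := x₁) (N := N)
    ⟨x₂.den * y₁.den * y₂.den, by ring⟩
  obtain ⟨X₂, hX₂⟩ := Rat.exists_intCast_eq_mul_of_den_dvd (q := x₂) (N := N)
    ⟨x₁.den * y₁.den * y₂.den, by ring⟩
  obtain ⟨Y₁, hY₁⟩ := Rat.exists_intCast_eq_mul_of_den_dvd (q := y₁) (N := N)
    ⟨x₁.den * x₂.den * y₂.den, by ring⟩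
  obtain ⟨Y₂, hY₂⟩ := Rat.exists_intCast_eq_mul_of_den_dvd (q := y₂) (N := N)
    ⟨x₁.den * x₂.den * y₁.den, by ring⟩
  have hX : diagForm z A B D X₁ X₂ Y₁ Y₂ = 0 := by
    have : ((diagForm z A B D X₁ X₂ Y₁ Y₂ : ℤ) : ℚ) =
        N ^ 2 * diagForm (z : ℚ) A B D x₁ x₂ y₁ y₂ := by
      rw [Int.cast_diagForm, hX₁, hX₂, hY₁, hY₂, diagForm_mul]
    rw [h, mul_zero] at this
    exact_mod_cast this
  have descale {X : ℤ} {x : ℚ} (hX : (X : ℚ) = N * x) (h0 : X = 0) : x = 0 := by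
    rw [h0, Int.cast_zero, eq_comm, mul_eq_zero] at hX
    exact hX.resolve_left hN
  obtain ⟨h₁, h₂, h₃, h₄⟩ := hℤ hX
  exact ⟨descale hX₁ h₁, descale hX₂ h₂, descale hY₁ h₃, descale hY₂ h₄⟩

theorem admissible_mod_p_general (z : ℤ) (hz : Squarefree z)
    (p : ℕ) (hp : p.Prime) (hp4 : p % 4 = 3) (hpz : (p : ℤ) ∣ z)
    (c₁ c₂ c₃ : ℤ)
    (h₁ : 1 - 2 * c₁ ≡ 1 [ZMOD p]) (h₂ : c₂ ≡ -1 [ZMOD p]) (h₃ : c₃ ≡ 0 [ZMOD p]) :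
    (¬ ∃ x₁ x₂ y₁ y₂ : ℤ,
        Nat.gcd (Int.gcd x₁ x₂) (Int.gcd y₁ y₂) = 1 ∧
        x₁ ^ 2 + z * (1 - 2 * c₁) * x₂ ^ 2 - (c₂ + c₃) * y₁ ^ 2
            + z * (c₃ - c₂) * y₂ ^ 2 = 0 ∧
        (1 - c₁) * x₁ * x₂ = c₂ * y₁ * y₂) ∧
    (∀ x₁ x₂ y₁ y₂ : ℚ,
        x₁ ^ 2 + (z : ℚ) * (1 - 2 * (c₁ : ℚ)) * x₂ ^ 2 - ((c₂ : ℚ) + (c₃ : ℚ)) * y₁ ^ 2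
            + (z : ℚ) * ((c₃ : ℚ) - (c₂ : ℚ)) * y₂ ^ 2 = 0 →
        (1 - (c₁ : ℚ)) * x₁ * x₂ = (c₂ : ℚ) * y₁ * y₂ →
        x₁ = 0 ∧ x₂ = 0 ∧ y₁ = 0 ∧ y₂ = 0) := by
  have := Fact.mk hp
  have hB : -(c₂ + c₃) ≡ 1 [ZMOD p] := by simpa using (h₂.add h₃).neg
  have hD : c₃ - c₂ ≡ 1 [ZMOD p] := by simpa using h₃.sub h₂
  have hℤ {x₁ x₂ y₁ y₂ : ℤ}
      (h : diagForm z (1 - 2 * c₁) (-(c₂ + c₃)) (c₃ - c₂) x₁ x₂ y₁ y₂ = 0) :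
      x₁ = 0 ∧ x₂ = 0 ∧ y₁ = 0 ∧ y₂ = 0 :=
    eq_zero_of_diagForm_eq_zero hp4 hz hpz h₁ hB hD h
  constructor
  · rintro ⟨x₁, x₂, y₁, y₂, hgcd, h, -⟩
    have hform : diagForm z (1 - 2 * c₁) (-(c₂ + c₃)) (c₃ - c₂) x₁ x₂ y₁ y₂ = 0 := by
      unfold diagForm; linear_combination h
    obtain ⟨rfl, rfl, rfl, rfl⟩ := hℤ hform
    simp at hgcd
  · intro x₁ x₂ y₁ y₂ h _
    exact rat_eq_zero_of_diagForm_eq_zero hℤ (by push_cast [diagForm]; linear_combination h)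

/-- For z square-free divisible by a prime p ≡ 3 (mod 4) and integers
c₁, c₂, c₃ with 1-2c₁ ≡ 1, c₂ ≡ -1, c₃ ≡ 0 (mod p), the admissibility system has no
primitive integral solution, hence only the trivial rational solution. -/
theorem admissible_mod_p (z : ℤ) (hz : Squarefree z) (hz1 : z ≠ 1)
    (p : ℕ) (hp : p.Prime) (hp4 : p % 4 = 3) (hpz : (p : ℤ) ∣ z)
    (c₁ c₂ c₃ : ℤ)
    (h₁ : 1 - 2 * c₁ ≡ 1 [ZMOD p]) (h₂ : c₂ ≡ -1 [ZMOD p]) (h₃ : c₃ ≡ 0 [ZMOD p]) :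
    (¬ ∃ x₁ x₂ y₁ y₂ : ℤ,
        Nat.gcd (Int.gcd x₁ x₂) (Int.gcd y₁ y₂) = 1 ∧
        x₁ ^ 2 + z * (1 - 2 * c₁) * x₂ ^ 2 - (c₂ + c₃) * y₁ ^ 2
            + z * (c₃ - c₂) * y₂ ^ 2 = 0 ∧
        (1 - c₁) * x₁ * x₂ = c₂ * y₁ * y₂) ∧
    (∀ x₁ x₂ y₁ y₂ : ℚ,
        x₁ ^ 2 + (z : ℚ) * (1 - 2 * (c₁ : ℚ)) * x₂ ^ 2 - ((c₂ : ℚ) + (c₃ : ℚ)) * y₁ ^ 2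
            + (z : ℚ) * ((c₃ : ℚ) - (c₂ : ℚ)) * y₂ ^ 2 = 0 →
        (1 - (c₁ : ℚ)) * x₁ * x₂ = (c₂ : ℚ) * y₁ * y₂ →
        x₁ = 0 ∧ x₂ = 0 ∧ y₁ = 0 ∧ y₂ = 0) :=
  admissible_mod_p_general z hz p hp hp4 hpz c₁ c₂ c₃ h₁ h₂ h₃
end

section
/- Let q be a positive rational that is not a sum of two rational squares. Then the only rational solution (x₁,x₂,y₁,y₂) of the system { x₁² - q·x₂² + y₁² + y₂² = 0 ; ((q+1)/2)·x₁·x₂ = 0 } is the trivial one. -/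
theorem eq_zero_of_mul_sq_eq_sq_add_sq {K : Type*} [Field K] {q x a b : K}
    (hq : ¬ ∃ a b : K, q = a ^ 2 + b ^ 2) (h : q * x ^ 2 = a ^ 2 + b ^ 2) : x = 0 := by
  by_contra hx
  refine hq ⟨a / x, b / x, ?_⟩
  field_simp
  exact h

theorem eq_zero_of_sq_add_sq_add_sq_eq_zero {R : Type*} [CommRing R] [LinearOrder R]
    [IsStrictOrderedRing R] {a b c : R} (h : a ^ 2 + b ^ 2 + c ^ 2 = 0) :
    a = 0 ∧ b = 0 ∧ c = 0 := by
  refine ⟨?_, ?_, ?_⟩ <;> nlinarith [sq_nonneg a, sq_nonneg b, sq_nonneg c]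

/-- For q > 0 rational not a sum of two rational squares, the system
x₁² - q·x₂² + y₁² + y₂² = 0, ((q+1)/2)·x₁·x₂ = 0 has only the trivial solution. -/
theorem admissible_Qi_family_one (q : ℚ) (hq : 0 < q)
    (hq2 : ¬ ∃ a b : ℚ, q = a ^ 2 + b ^ 2) :
    ∀ x₁ x₂ y₁ y₂ : ℚ,
      x₁ ^ 2 - q * x₂ ^ 2 + y₁ ^ 2 + y₂ ^ 2 = 0 →
      ((q + 1) / 2) * x₁ * x₂ = 0 →
      x₁ = 0 ∧ x₂ = 0 ∧ y₁ = 0 ∧ y₂ = 0 := by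
  intro x₁ x₂ y₁ y₂ hquad hprod
  have hcoeff : (q + 1) / 2 ≠ 0 := by positivity
  have hx₂ : x₂ = 0 := by
    rcases mul_eq_zero.mp hprod with h | hx₂
    · have hx₁ : x₁ = 0 := (mul_eq_zero.mp h).resolve_left hcoeff
      subst hx₁
      exact eq_zero_of_mul_sq_eq_sq_add_sq (x := x₂) (a := y₁) (b := y₂) hq2
        (by linear_combination -hquad)
    · exact hx₂
  subst hx₂
  obtain ⟨hx₁, hy₁, hy₂⟩ := eq_zero_of_sq_add_sq_add_sq_eq_zero (a := x₁) (b := y₁) (c := y₂)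
    (by linear_combination hquad)
  exact ⟨hx₁, rfl, hy₁, hy₂⟩
end
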